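/- Let f ∈ ℤ[X] be a polynomial of even degree all of whose coefficients are odd. Then f is squarefree in ℚ[X]; in particular, the discriminant of f is nonzero. -/

import Mathlib

/-!
Modulo 2, `f` becomes `1 + X + ⋯ + X ^ n`, a divisor of `X ^ (n + 1) - 1`, which is separable over
`𝔽₂` because `n + 1` is odd. The leading coefficient is odd, so reduction modulo 2 preserves the
degree. A square factor over `ℚ` gives, by Gauss's lemma, `f = p * p * q` over `ℤ` with `p`
primitive; modulo 2, `p` must become a unit, so `deg f = deg q̄ ≤ deg q` forces `deg p = 0`.
-/

open Polynomial

/-- The product `∏_{i<j} (α_i - α_j)^2` over a list of complex numbers. -/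
noncomputable def pairProd (l : List ℂ) : ℂ :=
  ∏ i : Fin l.length, ∏ j : Fin l.length,
    if (i : ℕ) < (j : ℕ) then (l.get i - l.get j) ^ 2 else 1

/-- The discriminant `Δ(f) = a_n^{2n-2} ∏_{i<j} (α_i - α_j)^2` of an integer
polynomial, where `α_1, …, α_n` are its complex zeros with multiplicity. -/
noncomputable def polyDisc (f : ℤ[X]) : ℂ :=
  (f.leadingCoeff : ℂ) ^ (2 * (f.natDegree : ℤ) - 2) * pairProd ((f.aroots ℂ).toList)

/-- `P(𝒩)`: integer polynomials with all coefficients in `N` and nonzero constant term. -/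
def Pset (N : Set ℤ) : Set ℤ[X] :=
  {f | (∀ i ≤ f.natDegree, f.coeff i ∈ N) ∧ f.eval 0 ≠ 0}

/-- `W(𝒩)`: all complex zeros of polynomials in `P(𝒩)`. -/
def Wset (N : Set ℤ) : Set ℂ :=
  {z | ∃ f ∈ Pset N, aeval z f = 0}

/-- `M(𝒩)`: the closure of `W(𝒩)` in `ℂ`. -/
noncomputable def Mset (N : Set ℤ) : Set ℂ := closure (Wset N)

/-- `P^□(𝒩)`: polynomials in `P(𝒩)` whose discriminant is the square of a rational. -/
noncomputable def PsqSet (N : Set ℤ) : Set ℤ[X] :=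
  {f | f ∈ Pset N ∧ ∃ q : ℚ, polyDisc f = (q : ℂ) ^ 2}

/-- `W^□(𝒩)`: all complex zeros of polynomials in `P^□(𝒩)`. -/
noncomputable def WsqSet (N : Set ℤ) : Set ℂ :=
  {z | ∃ f ∈ PsqSet N, aeval z f = 0}

/-- `M^□(𝒩)`: the closure of `W^□(𝒩)` in `ℂ`. -/
noncomputable def MsqSet (N : Set ℤ) : Set ℂ := closure (WsqSet N)

open scoped nonZeroDivisors

namespace Polynomial

theorem natDegree_eq_zero_of_mul_self_dvd_of_squarefree_map {R S : Type*} [CommSemiring R]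
    [NoZeroDivisors R] [CommSemiring S] [NoZeroDivisors S] [Nontrivial S] (φ : R →+* S)
    {f p : R[X]}
    (hdeg : (f.map φ).natDegree = f.natDegree) (hsq : Squarefree (f.map φ)) (hp : p * p ∣ f) :
    p.natDegree = 0 := by
  obtain ⟨q, rfl⟩ := hp
  have hmap0 : (p * p * q).map φ ≠ 0 := hsq.ne_zero
  have hpq0 : p * p * q ≠ 0 := by rintro h; simp [h] at hmap0
  rw [Polynomial.map_mul, Polynomial.map_mul] at hsq hdeg hmap0
  have hunit : IsUnit (p.map φ) := hsq _ (dvd_mul_right _ _)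
  have hp0 := left_ne_zero_of_mul (left_ne_zero_of_mul hpq0)
  have hq0 := right_ne_zero_of_mul hpq0
  rw [natDegree_mul (left_ne_zero_of_mul hmap0) (right_ne_zero_of_mul hmap0),
    natDegree_mul hunit.ne_zero hunit.ne_zero, natDegree_eq_zero_of_isUnit hunit,
    natDegree_mul (mul_ne_zero hp0 hp0) hq0, natDegree_mul hp0 hp0] at hdeg
  have := natDegree_map_le (f := φ) (p := q)
  omega

theorem IsPrimitive.isUnit_of_natDegree_eq_zero {R : Type*} [CommSemiring R] {p : R[X]}
    (hp : p.IsPrimitive) (hdeg : p.natDegree = 0) : IsUnit p := by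
  rw [eq_C_of_natDegree_eq_zero hdeg] at hp ⊢
  exact isUnit_C.mpr (hp _ dvd_rfl)

theorem squarefree_map_of_isUnit_of_isPrimitive_of_mul_self_dvd {R K : Type*} [CommRing R]
    [IsDomain R] [NormalizedGCDMonoid R] [Field K] [Algebra R K] [IsFractionRing R K] {f : R[X]}
    (hf : f ≠ 0) (h : ∀ p : R[X], p.IsPrimitive → p * p ∣ f → IsUnit p) :
    Squarefree (f.map (algebraMap R K)) := by
  intro k hk
  have hk0 : k ≠ 0 := by
    rintro rfl
    exact (Polynomial.map_ne_zero_iff (IsFractionRing.injective R K)).mpr hf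
      (zero_dvd_iff.mp (by simpa using hk))
  set p := (IsLocalization.integerNormalization R⁰ k).primPart
  have hprim : p.IsPrimitive := isPrimitive_primPart _
  obtain ⟨b, hb, hbk⟩ := IsLocalization.integerNormalization_spec R⁰ k
  have hb0 : algebraMap R K b ≠ 0 :=
    (map_ne_zero_iff _ (IsFractionRing.injective R K)).mpr (nonZeroDivisors.ne_zero hb)
  have hpk : p.map (algebraMap R K) ∣ k :=
    calc p.map (algebraMap R K)
        ∣ (IsLocalization.integerNormalization R⁰ k).map (algebraMap R K) :=
          Polynomial.map_dvd _ (primPart_dvd _)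
      _ = C (algebraMap R K b) * k := by rw [hbk, Algebra.smul_def, algebraMap_apply]
      _ ∣ k := (isUnit_C.mpr (isUnit_iff_ne_zero.mpr hb0)).mul_left_dvd.mpr dvd_rfl
  have hpp : p * p ∣ f := (hprim.mul hprim).dvd_of_fraction_map_dvd_fraction_map (K := K)
    (by rw [Polynomial.map_mul]; exact (mul_dvd_mul hpk hpk).trans hk)
  exact isUnit_or_eq_zero_of_isUnit_integerNormalization_primPart hk0 (h p hprim hpp)

theorem squarefree_map_algebraMap_of_squarefree_map {R K S : Type*} [CommRing R] [IsDomain R]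
    [NormalizedGCDMonoid R] [Field K] [Algebra R K] [IsFractionRing R K] [CommSemiring S]
    [NoZeroDivisors S] [Nontrivial S] (φ : R →+* S) {f : R[X]}
    (hdeg : (f.map φ).natDegree = f.natDegree) (hsq : Squarefree (f.map φ)) :
    Squarefree (f.map (algebraMap R K)) := by
  have hf : f ≠ 0 := by rintro rfl; exact hsq.ne_zero (Polynomial.map_zero φ)
  exact squarefree_map_of_isUnit_of_isPrimitive_of_mul_self_dvd hf fun p hp hpf =>
    hp.isUnit_of_natDegree_eq_zero
      (natDegree_eq_zero_of_mul_self_dvd_of_squarefree_map φ hdeg hsq hpf)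

theorem squarefree_sum_range_X_pow {K : Type*} [Field K] {n : ℕ} (hn : (n : K) ≠ 0) :
    Squarefree (∑ i ∈ Finset.range n, (X : K[X]) ^ i) :=
  (separable_X_pow_sub_C 1 hn one_ne_zero).squarefree.squarefree_of_dvd
    ⟨X - 1, by rw [geom_sum_mul, C_1]⟩

theorem map_zmod_two_eq_sum_range_X_pow {f : ℤ[X]} (hodd : ∀ i ≤ f.natDegree, Odd (f.coeff i)) :
    f.map (Int.castRingHom (ZMod 2)) = ∑ i ∈ Finset.range (f.natDegree + 1), X ^ i := by
  ext i
  simp only [coeff_map, finsetSum_coeff, coeff_X_pow, Finset.sum_ite_eq, Finset.mem_range,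
    Nat.lt_add_one_iff, eq_intCast]
  split_ifs with hi
  · exact (hodd i hi).intCast_zmod_two
  · rw [coeff_eq_zero_of_natDegree_lt (not_le.mp hi), Int.cast_zero]

end Polynomial

theorem pairProd_ne_zero {l : List ℂ} (hl : l.Nodup) : pairProd l ≠ 0 := by
  refine Finset.prod_ne_zero_iff.mpr fun i _ => Finset.prod_ne_zero_iff.mpr fun j _ => ?_
  split_ifs with hij
  · exact pow_ne_zero _
      (sub_ne_zero.mpr fun he => Fin.ne_of_val_ne hij.ne (hl.get_inj_iff.mp he))
  · exact one_ne_zero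

theorem polyDisc_ne_zero_of_squarefree {f : ℤ[X]} (hf : Squarefree (f.map (Int.castRingHom ℚ))) :
    polyDisc f ≠ 0 := by
  have hf0 : f ≠ 0 := by rintro rfl; exact hf.ne_zero (Polynomial.map_zero _)
  have hnodup : (f.aroots ℂ).Nodup := by
    rw [← aroots_map ℂ ℚ]
    exact nodup_roots (PerfectField.separable_iff_squarefree.mpr hf).map
  refine mul_ne_zero (zpow_ne_zero _ (by exact_mod_cast leadingCoeff_ne_zero.mpr hf0))
    (pairProd_ne_zero ?_)
  rwa [← Multiset.coe_nodup, Multiset.coe_toList]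

/-- A polynomial of even degree all of whose coefficients are odd is squarefree over
`ℚ`; in particular its discriminant is nonzero. -/
theorem squarefree_of_even_degree_odd_coeffs (f : ℤ[X]) (heven : Even f.natDegree)
    (hodd : ∀ i ≤ f.natDegree, Odd (f.coeff i)) :
    Squarefree (f.map (Int.castRingHom ℚ)) ∧ polyDisc f ≠ 0 := by
  have hlead : Int.castRingHom (ZMod 2) f.leadingCoeff = 1 :=
    (hodd _ le_rfl).intCast_zmod_two
  have hdeg : (f.map (Int.castRingHom (ZMod 2))).natDegree = f.natDegree :=
    natDegree_map_of_leadingCoeff_ne_zero _ (hlead ▸ one_ne_zero)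
  have hsq2 : Squarefree (f.map (Int.castRingHom (ZMod 2))) := by
    rw [map_zmod_two_eq_sum_range_X_pow hodd]
    exact squarefree_sum_range_X_pow (ZMod.natCast_ne_zero_iff_odd.mpr heven.add_one)
  have hsq : Squarefree (f.map (Int.castRingHom ℚ)) :=
    squarefree_map_algebraMap_of_squarefree_map _ hdeg hsq2
  exact ⟨hsq, polyDisc_ne_zero_of_squarefree hsq⟩
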